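/- Let G be a finite simple chordal graph that is P_7-free, and let IR be an irredundant set of G. Then D_RN(G) is an independence system: for every nonempty A ∈ D_RN(G) and every a ∈ A, the set A \ {a} belongs to D_RN(G). -/

import Mathlib

variable {V : Type*}

/-- The closed neighborhood `N[x]` of a vertex. -/
def cnbr (G : SimpleGraph V) (x : V) : Set V := insert x (G.neighborSet x)

/-- `N[X] = ⋃ x ∈ X, N[x]`. -/
def cnbrSet (G : SimpleGraph V) (X : Set V) : Set V := ⋃ x ∈ X, cnbr G x

/-- `N(X) = N[X] \ X`. -/
def onbrSet (G : SimpleGraph V) (X : Set V) : Set V := cnbrSet G X \ X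

/-- `D` dominates `X` if `X ⊆ N[D]`. -/
def Dominates (G : SimpleGraph V) (D X : Set V) : Prop := X ⊆ cnbrSet G D

/-- `D` is a minimal dominating set of `G`. -/
def IsMinDomSet (G : SimpleGraph V) (D : Set V) : Prop :=
  Dominates G D Set.univ ∧ ∀ D' : Set V, D' ⊂ D → ¬ Dominates G D' Set.univ

/-- `Priv(D, x)`: private neighbors of `x` w.r.t. `D`. -/
def priv (G : SimpleGraph V) (D : Set V) (x : V) : Set V := {u | cnbr G u ∩ D = {x}}

/-- `IR` is an irredundant set of `G`. -/
def IsIrredundantSet (G : SimpleGraph V) (IR : Set V) : Prop :=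
  (∀ v : V, ∃ x ∈ IR, cnbr G x ⊆ cnbr G v) ∧
  (∀ x ∈ IR, ∀ v : V, ¬ cnbr G v ⊂ cnbr G x) ∧
  (∀ x ∈ IR, ∀ y ∈ IR, x ≠ y → cnbr G x ≠ cnbr G y)

/-- `Priv_IR(D, x) = Priv(D, x) ∩ IR`. -/
def privIR (G : SimpleGraph V) (IR D : Set V) (x : V) : Set V := priv G D x ∩ IR

/-- `A ∈ D_RN(G)`: `A` is the intersection of a minimal dominating set with `RN = V \ IR`. -/
def memDRN (G : SimpleGraph V) (IR A : Set V) : Prop :=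
  ∃ D : Set V, IsMinDomSet G D ∧ A = D ∩ IRᶜ

/-- `G` is `P_k`-free: it has no induced path on `k` vertices. -/
def PkFree (G : SimpleGraph V) (k : ℕ) : Prop :=
  ¬ ∃ f : Fin k → V, Function.Injective f ∧
      ∀ i j : Fin k, G.Adj (f i) (f j) ↔ (i.val + 1 = j.val ∨ j.val + 1 = i.val)

/-- `G` is chordal: no induced cycle on `n ≥ 4` vertices. -/
def Chordal (G : SimpleGraph V) : Prop :=
  ∀ n : ℕ, 4 ≤ n → ¬ ∃ f : ZMod n → V, Function.Injective f ∧
      ∀ i j : ZMod n, G.Adj (f i) (f j) ↔ (i = j + 1 ∨ j = i + 1)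

/-- `C` is a connected component of the subgraph of `G` induced by `S`. -/
def IsCompOf (G : SimpleGraph V) (S C : Set V) : Prop :=
  C ⊆ S ∧ C.Nonempty ∧ (G.induce C).Connected ∧
    ∀ x ∈ C, ∀ y ∈ S, G.Adj x y → y ∈ C

/-- `B(A)`: the elements of `A` having an irredundant private neighbor in some irredundant
component entirely contained in `N(A)`. -/
def Bset (G : SimpleGraph V) (IR A : Set V) : Set V :=
  {a ∈ A | ∃ C : Set V, IsCompOf G IR C ∧ C ⊆ onbrSet G A ∧ (privIR G IR A a ∩ C).Nonempty}

/-- Domination inside the subgraph induced by `C`: every `u ∈ X` equals, or is adjacent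
(within `C`) to, some `d ∈ D`.  For `D, X ⊆ C` this is domination in `G[C]`. -/
def domIn (G : SimpleGraph V) (C D X : Set V) : Prop :=
  ∀ u ∈ X, ∃ d ∈ D, u = d ∨ (G.Adj d u ∧ d ∈ C ∧ u ∈ C)

/-!
Let `D` be a minimal dominating set and `a ∈ D \ IR`. The set `(D \ {a}) ∪ Priv_IR(D, a)` still
dominates, so it contains a minimal dominating set `D'`; its vertices outside `D` lie in `IR`, so
`D' ∩ RN ⊆ (D ∩ RN) \ {a}`. Conversely, every `b ∈ (D ∩ RN) \ {a}` has an irredundant private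
neighbour `t` that sees no vertex of `Priv_IR(D, a)`; then `b` is the only neighbour of `t` in the
new set, so `b ∈ D'`. If no such `t` existed, irredundance would produce an induced path
`y, a, s, t, b, z, z'`: chordality keeps each one-vertex extension of an induced path induced,
and `P₇`-freeness forbids the result.
-/

section

variable {G : SimpleGraph V}

section ClosedNeighborhood

lemma mem_cnbr {x v : V} : v ∈ cnbr G x ↔ v = x ∨ G.Adj x v := Iff.rfl

lemma self_mem_cnbr (x : V) : x ∈ cnbr G x := Set.mem_insert x _

lemma mem_cnbr_of_adj {x v : V} (h : G.Adj x v) : v ∈ cnbr G x := Or.inr h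

lemma adj_of_mem_cnbr {x v : V} (h : v ∈ cnbr G x) (hne : v ≠ x) : G.Adj x v :=
  (mem_cnbr.1 h).resolve_left hne

lemma mem_cnbr_comm {x v : V} : v ∈ cnbr G x ↔ x ∈ cnbr G v := by
  rw [mem_cnbr, mem_cnbr, G.adj_comm, eq_comm]

lemma mem_cnbrSet {D : Set V} {v : V} : v ∈ cnbrSet G D ↔ ∃ d ∈ D, v ∈ cnbr G d := by
  simp [cnbrSet]

lemma mem_cnbr_inter_of_mem_priv {D : Set V} {u d : V} (hu : u ∈ priv G D d) :
    d ∈ cnbr G u ∩ D :=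
  (hu : cnbr G u ∩ D = {d}) ▸ Set.mem_singleton d

lemma eq_of_mem_priv {D : Set V} {u d w : V} (hu : u ∈ priv G D d) (hw : w ∈ cnbr G u)
    (hwD : w ∈ D) : w = d := by
  have : w ∈ cnbr G u ∩ D := ⟨hw, hwD⟩
  rwa [hu] at this

end ClosedNeighborhood

section Domination

variable {D : Set V}

lemma dominates_univ_iff : Dominates G D Set.univ ↔ ∀ v, (cnbr G v ∩ D).Nonempty := by
  simp only [Dominates, Set.univ_subset_iff, Set.eq_univ_iff_forall, mem_cnbrSet]
  exact forall_congr' fun v => ⟨fun ⟨d, hd, hv⟩ => ⟨d, mem_cnbr_comm.1 hv, hd⟩,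
    fun ⟨d, hv, hd⟩ => ⟨d, hd, mem_cnbr_comm.1 hv⟩⟩

lemma Dominates.mem_priv_of_subset (hD : Dominates G D Set.univ) {v d : V}
    (h : cnbr G v ∩ D ⊆ {d}) : v ∈ priv G D d :=
  (Set.Nonempty.subset_singleton_iff (dominates_univ_iff.1 hD v)).1 h

lemma Dominates.exists_ne_of_notMem_priv (hD : Dominates G D Set.univ) {v d : V}
    (h : v ∉ priv G D d) : ∃ e ∈ cnbr G v ∩ D, e ≠ d := by
  by_contra! hall
  exact h (hD.mem_priv_of_subset hall)

lemma IsMinDomSet.exists_mem_priv (hD : IsMinDomSet G D) {d : V} (hd : d ∈ D) :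
    ∃ u, u ∈ priv G D d := by
  by_contra! h
  refine hD.2 (D \ {d}) (Set.sdiff_singleton_ssubset.2 hd) (dominates_univ_iff.2 fun v => ?_)
  obtain ⟨e, ⟨hev, heD⟩, hed⟩ := hD.1.exists_ne_of_notMem_priv (h v)
  exact ⟨e, hev, heD, hed⟩

lemma IsMinDomSet.eq_of_cnbr_subset (hD : IsMinDomSet G D) {d b : V} (hd : d ∈ D) (hb : b ∈ D)
    (h : cnbr G d ⊆ cnbr G b) : b = d := by
  obtain ⟨u, hu⟩ := hD.exists_mem_priv hd
  have hud : u ∈ cnbr G d := mem_cnbr_comm.1 (mem_cnbr_inter_of_mem_priv hu).1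
  exact eq_of_mem_priv hu (mem_cnbr_comm.1 (h hud)) hb

lemma exists_isMinDomSet_subset [Finite V] {X : Set V} (hX : Dominates G X Set.univ) :
    ∃ D ⊆ X, IsMinDomSet G D := by
  obtain ⟨D, hDX, hD⟩ := exists_minimal_le_of_wellFoundedLT (Dominates G · Set.univ) X hX
  exact ⟨D, hDX, hD.1, fun _ hlt hdom => hD.not_lt hdom hlt⟩

lemma Dominates.mem_of_cnbr_inter_eq_singleton (hD : Dominates G D Set.univ) {X : Set V}
    (hDX : D ⊆ X) {t b : V} (ht : cnbr G t ∩ X = {b}) : b ∈ D := by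
  obtain ⟨e, het, heD⟩ := dominates_univ_iff.1 hD t
  have : e ∈ cnbr G t ∩ X := ⟨het, hDX heD⟩
  rw [ht, Set.mem_singleton_iff] at this
  exact this ▸ heD

end Domination

section Irredundant

variable {IR D : Set V}

lemma IsIrredundantSet.not_cnbr_subset (hIR : IsIrredundantSet G IR) {x v w : V} (hx : x ∈ IR)
    (hwx : w ∈ cnbr G x) (hwv : w ∉ cnbr G v) : ¬ cnbr G v ⊆ cnbr G x := by
  intro hsub
  have heq : cnbr G v = cnbr G x := by
    by_contra hne
    exact hIR.2.1 x hx v (hsub.ssubset_of_ne hne)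
  exact hwv (heq ▸ hwx)

lemma IsIrredundantSet.exists_mem_privIR_cnbr_subset (hIR : IsIrredundantSet G IR)
    (hD : Dominates G D Set.univ) {u d : V} (hu : u ∈ priv G D d) :
    ∃ t ∈ privIR G IR D d, cnbr G t ⊆ cnbr G u := by
  obtain ⟨t, htIR, htu⟩ := hIR.1 u
  have hsub : cnbr G t ∩ D ⊆ {d} := (hu : cnbr G u ∩ D = {d}) ▸ Set.inter_subset_inter_left D htu
  exact ⟨t, ⟨hD.mem_priv_of_subset hsub, htIR⟩, htu⟩

lemma IsMinDomSet.exists_mem_privIR (hIR : IsIrredundantSet G IR) (hD : IsMinDomSet G D)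
    {d : V} (hd : d ∈ D) : ∃ t, t ∈ privIR G IR D d := by
  obtain ⟨u, hu⟩ := hD.exists_mem_priv hd
  obtain ⟨t, ht, -⟩ := hIR.exists_mem_privIR_cnbr_subset hD.1 hu
  exact ⟨t, ht⟩

lemma IsIrredundantSet.dominates_sdiff_union_privIR (hIR : IsIrredundantSet G IR)
    (hD : Dominates G D Set.univ) (a : V) :
    Dominates G ((D \ {a}) ∪ privIR G IR D a) Set.univ := by
  refine dominates_univ_iff.2 fun v => ?_
  by_cases hv : v ∈ priv G D a
  · obtain ⟨t, ht, htv⟩ := hIR.exists_mem_privIR_cnbr_subset hD hv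
    exact ⟨t, htv (self_mem_cnbr t), Or.inr ht⟩
  · obtain ⟨e, ⟨hev, heD⟩, hea⟩ := hD.exists_ne_of_notMem_priv hv
    exact ⟨e, hev, Or.inl ⟨heD, hea⟩⟩

end Irredundant

section InducedPath

def IsInducedPath (G : SimpleGraph V) (n : ℕ) (p : ℕ → V) : Prop :=
  Set.InjOn p (Set.Iio n) ∧ ∀ i < n, ∀ j < n, (G.Adj (p i) (p j) ↔ i + 1 = j ∨ j + 1 = i)

variable {n : ℕ} {p : ℕ → V} {x : V}

lemma IsInducedPath.drop (hp : IsInducedPath G n p) (k : ℕ) :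
    IsInducedPath G (n - k) (fun i => p (k + i)) := by
  refine ⟨fun i hi j hj hij => ?_, fun i hi j hj => ?_⟩
  · simp only [Set.mem_Iio] at hi hj
    have := hp.1 (by simp only [Set.mem_Iio]; omega) (by simp only [Set.mem_Iio]; omega) hij
    omega
  · rw [hp.2 _ (by omega) _ (by omega)]
    omega

lemma Set.InjOn.update (hp : Set.InjOn p (Set.Iio n)) (hne : ∀ i < n, p i ≠ x) :
    Set.InjOn (Function.update p n x) (Set.Iio (n + 1)) := by
  intro i hi j hj hij
  simp only [Set.mem_Iio, Nat.lt_succ_iff_lt_or_eq] at hi hj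
  rcases hi with hi | rfl <;> rcases hj with hj | rfl
  · simp only [Function.update_of_ne hi.ne, Function.update_of_ne hj.ne] at hij
    exact hp hi hj hij
  · simp only [Function.update_of_ne hi.ne, Function.update_self] at hij
    exact absurd hij (hne i hi)
  · simp only [Function.update_of_ne hj.ne, Function.update_self] at hij
    exact absurd hij.symm (hne j hj)
  · rfl

lemma IsInducedPath.update (hp : IsInducedPath G n p) (hne : ∀ i < n, p i ≠ x)
    (hadj : ∀ i < n, (G.Adj (p i) x ↔ i + 1 = n)) :
    IsInducedPath G (n + 1) (Function.update p n x) := by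
  have hlt : ∀ {i}, i < n + 1 → i < n ∨ i = n := by omega
  refine ⟨hp.1.update hne, fun i hi j hj => ?_⟩
  rcases hlt hi with hi | rfl <;> rcases hlt hj with hj | rfl
  · simp only [Function.update_of_ne hi.ne, Function.update_of_ne hj.ne]
    exact hp.2 i hi j hj
  · simp only [Function.update_of_ne hi.ne, Function.update_self, hadj i hi]
    omega
  · simp only [Function.update_of_ne hj.ne, Function.update_self, G.adj_comm x, hadj j hj]
    omega
  · simp

lemma isInducedPath_pair {u v : V} (h : G.Adj u v) :
    IsInducedPath G 2 (Function.update (fun _ => u) 1 v) := by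
  have hu : IsInducedPath G 1 (fun _ => u) :=
    ⟨fun i hi j hj _ => by simp only [Set.mem_Iio] at hi hj; omega,
      fun i _ j _ => by simp only [SimpleGraph.irrefl, false_iff]; omega⟩
  exact hu.update (fun _ _ => h.ne) (fun i hi => by simp only [h, true_iff]; omega)

lemma IsInducedPath.mem_cnbr_succ (hp : IsInducedPath G n p) {i : ℕ} (hi : i + 1 < n) :
    p (i + 1) ∈ cnbr G (p i) :=
  mem_cnbr_of_adj ((hp.2 i (by omega) (i + 1) hi).2 (Or.inl rfl))

lemma PkFree.not_isInducedPath {k : ℕ} (hP : PkFree G k) : ¬ IsInducedPath G k p :=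
  fun hp => hP ⟨fun i => p i, fun i j h => Fin.ext (hp.1 i.2 j.2 h),
    fun i j => hp.2 i i.2 j j.2⟩

/-- `p 0, …, p (n - 1), x` is an induced cycle of length `n + 1 ≥ 4`. -/
lemma Chordal.false_of_isInducedPath (hch : Chordal G) (hn : 3 ≤ n) (hp : IsInducedPath G n p)
    (hne : ∀ i < n, p i ≠ x) (hadj : ∀ i < n, (G.Adj (p i) x ↔ i = 0 ∨ i + 1 = n)) : False := by
  obtain ⟨m, rfl⟩ : ∃ m, n = m + 3 := ⟨n - 3, by omega⟩
  set q := Function.update p (m + 3) x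
  have hlt : ∀ {i}, i < m + 4 → i < m + 3 ∨ i = m + 3 := by omega
  refine hch (m + 4) (by omega)
    ⟨fun i : Fin (m + 4) => q i, fun i j hij => ?_, fun (i j : Fin (m + 4)) => ?_⟩
  · exact Fin.ext (hp.1.update hne (Set.mem_Iio.2 i.2) (Set.mem_Iio.2 j.2) hij)
  · have hi := i.2
    have hj := j.2
    change G.Adj (q i) (q j) ↔ i = j + 1 ∨ j = i + 1
    rw [Fin.ext_iff, Fin.ext_iff, Fin.val_add_one, Fin.val_add_one]
    simp only [Fin.ext_iff, Fin.val_last]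
    rcases hlt hi with hi | hi <;> rcases hlt hj with hj | hj
    · simp only [q, Function.update_of_ne hi.ne, Function.update_of_ne hj.ne, hp.2 _ hi _ hj]
      split_ifs <;> omega
    · simp only [q, Function.update_of_ne hi.ne, hj, Function.update_self, hadj _ hi]
      split_ifs <;> omega
    · simp only [q, Function.update_of_ne hj.ne, hi, Function.update_self, G.adj_comm x,
        hadj _ hj]
      split_ifs <;> omega
    · simp [q, hi, hj]

/-- In a chordal graph, a vertex adjacent to the end of an induced path but not to the
vertex before it extends the path: an earlier neighbour would close an induced cycle. -/
lemma Chordal.isInducedPath_update (hch : Chordal G) (hp : IsInducedPath G (n + 2) p)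
    (hx : x ∈ cnbr G (p (n + 1))) (hx' : x ∉ cnbr G (p n)) :
    IsInducedPath G (n + 3) (Function.update p (n + 2) x) := by
  classical
  have hlast : G.Adj (p (n + 1)) x :=
    adj_of_mem_cnbr hx fun h => hx' (h ▸ hp.mem_cnbr_succ (by omega))
  have hne : ∀ i < n + 2, p i ≠ x := by
    rintro i hi rfl
    rcases (by omega : i < n ∨ i = n ∨ i = n + 1) with h | rfl | rfl
    · have := (hp.2 i hi (n + 1) (by omega)).1 hlast.symm
      omega
    · exact hx' (self_mem_cnbr _)
    · exact G.irrefl hlast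
  have hfar : ∀ i < n, ¬ G.Adj (p i) x := by
    intro i hi hix
    set k := Nat.findGreatest (fun j => G.Adj (p j) x) n
    have hk : G.Adj (p k) x := Nat.findGreatest_spec (P := fun j => G.Adj (p j) x) hi.le hix
    have hkn : k < n := (Nat.findGreatest_le n).lt_of_ne fun h => hx' (h ▸ mem_cnbr_of_adj hk)
    refine hch.false_of_isInducedPath (n := n + 2 - k) (by omega) (hp.drop k)
      (fun i hi => hne _ (by omega)) fun i hi => ?_
    show G.Adj (p (k + i)) x ↔ _
    rcases (by omega : i = 0 ∨ k + i = n ∨ k + i = n + 1 ∨ (0 < i ∧ k + i < n)) with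
      rfl | h | h | ⟨h0, h⟩
    · exact iff_of_true hk (Or.inl rfl)
    · rw [h]
      exact iff_of_false (fun ha => hx' (mem_cnbr_of_adj ha)) (by omega)
    · rw [h]
      exact iff_of_true hlast (by omega)
    · exact iff_of_false
        (Nat.findGreatest_is_greatest (P := fun j => G.Adj (p j) x) (by omega) h.le) (by omega)
  refine hp.update hne fun i hi => ?_
  rcases (by omega : i < n ∨ i = n ∨ i = n + 1) with h | rfl | rfl
  · exact iff_of_false (hfar i h) (by omega)
  · exact iff_of_false (fun ha => hx' (mem_cnbr_of_adj ha)) (by omega)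
  · exact iff_of_true hlast rfl

end InducedPath

section Replacement

variable {IR D : Set V}

lemma exists_mem_privIR_forall_notMem_cnbr (hch : Chordal G) (hP7 : PkFree G 7)
    (hIR : IsIrredundantSet G IR) (hD : IsMinDomSet G D) {a b : V} (haD : a ∈ D) (hbD : b ∈ D)
    (hab : a ≠ b) :
    ∃ t ∈ privIR G IR D b, ∀ s ∈ privIR G IR D a, s ∉ cnbr G t := by
  by_contra! hc
  obtain ⟨t0, ht0⟩ := hD.exists_mem_privIR hIR hbD
  obtain ⟨s0, hs0, hs0t0⟩ := hc t0 ht0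
  by_cases hz : ∃ z ∈ cnbr G b \ cnbr G t0, ¬ cnbr G z ⊆ cnbr G b
  · obtain ⟨z, ⟨hzb, hzt0⟩, hz⟩ := hz
    obtain ⟨z', hz'z, hz'b⟩ := Set.not_subset.1 hz
    have ht0s0 : t0 ∈ cnbr G s0 := mem_cnbr_comm.1 hs0t0
    have ht0a : t0 ∉ cnbr G a := fun h => hab (eq_of_mem_priv ht0.1 (mem_cnbr_comm.1 h) haD)
    obtain ⟨y, hya, hys0⟩ := Set.not_subset.1 (hIR.not_cnbr_subset hs0.2 ht0s0 ht0a)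
    have has0 : a ∈ cnbr G s0 := (mem_cnbr_inter_of_mem_priv hs0.1).1
    have p2 := isInducedPath_pair (G := G)
      (adj_of_mem_cnbr hya fun h => hys0 (h ▸ has0)).symm
    have p3 := hch.isInducedPath_update (n := 0) p2
      (by simpa using mem_cnbr_comm.1 has0) (by simpa [mem_cnbr_comm] using hys0)
    have p4 := hch.isInducedPath_update (n := 1) p3 (by simpa using ht0s0) (by simpa using ht0a)
    have p5 := hch.isInducedPath_update (n := 2) p4
      (by simpa using (mem_cnbr_inter_of_mem_priv ht0.1).1)
      (by simpa using fun h => hab (eq_of_mem_priv hs0.1 h hbD).symm)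
    have p6 := hch.isInducedPath_update (n := 3) p5 (by simpa using hzb) (by simpa using hzt0)
    have p7 := hch.isInducedPath_update (n := 4) p6 (by simpa using hz'z) (by simpa using hz'b)
    exact hP7.not_isInducedPath p7
  · push Not at hz
    by_cases hb : b ∈ priv G D b
    · obtain ⟨t, ht, htb⟩ := hIR.exists_mem_privIR_cnbr_subset hD.1 hb
      obtain ⟨s, hs, hst⟩ := hc t ht
      exact hab (eq_of_mem_priv hs.1 (mem_cnbr_comm.1 (htb hst)) hbD).symm
    · obtain ⟨d, ⟨hdb, hdD⟩, hdb'⟩ := hD.1.exists_ne_of_notMem_priv hb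
      have hdt0 : d ∉ cnbr G t0 := fun h => hdb' (eq_of_mem_priv ht0.1 h hdD)
      exact hdb' (hD.eq_of_cnbr_subset hdD hbD (hz d ⟨hdb, hdt0⟩)).symm

end Replacement

end

/-- In a `P₇`-free chordal graph, `D_RN(G)` is an independence system. -/
theorem stmt_4 [Fintype V] (G : SimpleGraph V) (hch : Chordal G) (hP7 : PkFree G 7)
    (IR : Set V) (hIR : IsIrredundantSet G IR)
    (A : Set V) (hA : memDRN G IR A) (a : V) (ha : a ∈ A) :
    memDRN G IR (A \ {a}) := by
  obtain ⟨D, hD, rfl⟩ := hA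
  obtain ⟨haD, -⟩ := ha
  obtain ⟨D', hD'X, hD'⟩ := exists_isMinDomSet_subset (hIR.dominates_sdiff_union_privIR hD.1 a)
  refine ⟨D', hD', Set.Subset.antisymm (fun b hb => ?_) (fun w ⟨hwD', hwIR⟩ => ?_)⟩
  · obtain ⟨⟨hbD, hbIR⟩, hba⟩ := hb
    obtain ⟨t, ht, hta⟩ := exists_mem_privIR_forall_notMem_cnbr hch hP7 hIR hD haD hbD
      (fun h => hba h.symm)
    refine ⟨hD'.1.mem_of_cnbr_inter_eq_singleton hD'X (Set.eq_singleton_iff_unique_mem.2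
      ⟨⟨(mem_cnbr_inter_of_mem_priv ht.1).1, Or.inl ⟨hbD, hba⟩⟩, ?_⟩), hbIR⟩
    rintro w ⟨hwt, ⟨hwD, -⟩ | hwa⟩
    · exact eq_of_mem_priv ht.1 hwt hwD
    · exact absurd hwt (hta w hwa)
  · rcases hD'X hwD' with ⟨hwD, hwa⟩ | hwa
    · exact ⟨⟨hwD, hwIR⟩, hwa⟩
    · exact absurd hwa.2 hwIR
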